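/- Suppose $\phi \in L^\infty(\mathbb{T})$ factors as $\phi = \phi_- \phi_0$ where $\phi_-$ is invertible in $\overline{H^\infty(\mathbb{T})}$ (i.e. both $\phi_-$ and $\phi_-^{-1}$ have conjugates in $H^\infty$) and $\phi_0 \in L^\infty(\mathbb{T})$ is invertible and even ($\phi_0(t) = \phi_0(t^{-1})$ a.e.). Then $M(\phi) = T(\phi)+H(\phi)$ is invertible on $H^2(\mathbb{T})$ with inverse $M(\phi_0^{-1})M(\phi_-^{-1})$. -/

import Mathlib

open MeasureTheory Complex Real
noncomputable section
namespace TH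

abbrev Tp : ℝ := 2 * Real.pi
instance : Fact (0 < Tp) := ⟨by positivity⟩
abbrev 𝕋 := AddCircle Tp
abbrev μ : Measure 𝕋 := AddCircle.haarAddCircle
abbrev L2 := Lp ℂ 2 μ

open scoped Classical in
/-- Multiplication operator by `φ` (defined to be `0` if `φ` is not essentially bounded). -/
def Lmul (φ : 𝕋 → ℂ) : L2 →L[ℂ] L2 :=
  if hφ : MemLp φ ⊤ μ then
    LinearMap.mkContinuous
      { toFun := fun f => ((Lp.memLp f).smul (p := ⊤) (r := 2) hφ).toLp (φ • ⇑f)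
        map_add' := fun f g => by
          rw [← MemLp.toLp_add]
          exact MemLp.toLp_congr _ _ (by
            filter_upwards [Lp.coeFn_add f g] with x hx
            simp only [Pi.smul_apply, smul_eq_mul, Pi.mul_apply, hx, Pi.add_apply, mul_add])
        map_smul' := fun c f => by
          rw [RingHom.id_apply, ← MemLp.toLp_const_smul]
          exact MemLp.toLp_congr ((Lp.memLp (c • f)).smul (p := ⊤) (r := 2) hφ)
            (((Lp.memLp f).smul (p := ⊤) (r := 2) hφ).const_smul c) (by
            filter_upwards [Lp.coeFn_smul c f] with x hx
            simp only [Pi.smul_apply, smul_eq_mul, Pi.mul_apply, hx]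
            ring) }
      (eLpNorm φ ⊤ μ).toReal
      (fun f => by
        simp only [LinearMap.coe_mk, AddHom.coe_mk]
        rw [Lp.norm_toLp, Lp.norm_def, ← ENNReal.toReal_mul]
        refine ENNReal.toReal_mono ?_ ?_
        · exact ENNReal.mul_ne_top hφ.eLpNorm_ne_top (Lp.eLpNorm_ne_top f)
        · exact eLpNorm_smul_le_eLpNorm_top_mul_eLpNorm 2 (Lp.aestronglyMeasurable f) φ)
  else 0

/-- Composition with `x ↦ -x` on `L²`. -/
def Cneg : L2 → L2 :=
  Lp.compMeasurePreserving (fun x : 𝕋 => -x) (Measure.measurePreserving_neg μ)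

/-- The flip operator `J : f(t) ↦ t⁻¹ f(t⁻¹)`. -/
def Jop : L2 →L[ℂ] L2 :=
  { toFun := fun f => Lmul (fun x => fourier (-1) x) (Cneg f)
    map_add' := fun f g => by
      show Lmul _ (Cneg (f + g)) = Lmul _ (Cneg f) + Lmul _ (Cneg g)
      unfold Cneg
      rw [map_add, map_add]
    map_smul' := fun c f => by
      show Lmul _ (Cneg (c • f)) = c • Lmul _ (Cneg f)
      rw [← map_smul (Lmul fun x => fourier (-1) x)]
      congr 1
      apply Lp.ext
      unfold Cneg
      filter_upwards [Lp.coeFn_compMeasurePreserving (c • f) (Measure.measurePreserving_neg μ),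
        Lp.coeFn_smul c (Lp.compMeasurePreserving (fun x : 𝕋 => -x)
          (Measure.measurePreserving_neg μ) f),
        (Measure.measurePreserving_neg μ).quasiMeasurePreserving.ae_eq_comp (Lp.coeFn_smul c f),
        Lp.coeFn_compMeasurePreserving f (Measure.measurePreserving_neg μ)]
        with x hx1 hx2 hx3 hx4
      refine hx1.trans (hx3.trans ?_)
      have h5 : ((c • (↑↑f : 𝕋 → ℂ)) ∘ Neg.neg) x = c • (↑↑f ∘ Neg.neg) x := rfl
      rw [h5, ← hx4]
      exact hx2.symm
    cont := by
      exact (Lmul _).continuous.comp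
        (Lp.isometry_compMeasurePreserving (E := ℂ) (p := 2)
          (Measure.measurePreserving_neg μ)).continuous }

/-- The Hardy space `H²(𝕋)`: closed span of `{t^n : n ≥ 0}`. -/
def Hardy : Submodule ℂ L2 :=
  (Submodule.span ℂ (Set.range fun n : ℕ => (fourierLp 2 (n : ℤ) : L2))).topologicalClosure

instance : CompleteSpace Hardy :=
  (Submodule.isClosed_topologicalClosure _).completeSpace_coe

/-- The Riesz projection, as an operator on `L²(𝕋)`. -/
def Pproj : L2 →L[ℂ] L2 := Hardy.subtypeL ∘L Hardy.orthogonalProjectionOnto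

/-- The Toeplitz operator `T(φ) : f ↦ P(φ f)` on `H²`. -/
def Top (φ : 𝕋 → ℂ) : Hardy →L[ℂ] Hardy :=
  Hardy.orthogonalProjectionOnto ∘L Lmul φ ∘L Hardy.subtypeL

/-- The Hankel operator `H(φ) : f ↦ P(φ · Jf)` on `H²`. -/
def Hop (φ : 𝕋 → ℂ) : Hardy →L[ℂ] Hardy :=
  Hardy.orthogonalProjectionOnto ∘L Lmul φ ∘L Jop ∘L Hardy.subtypeL

/-- The Toeplitz + Hankel operator `M(φ) = T(φ) + H(φ)`. -/
def Mop (φ : 𝕋 → ℂ) : Hardy →L[ℂ] Hardy := Top φ + Hop φ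

/-- The flip `φ̃(t) = φ(t⁻¹)` of a function on the circle. -/
def flip (φ : 𝕋 → ℂ) : 𝕋 → ℂ := fun x => φ (-x)



/-! The operators satisfy `M(φ) g = P(φ · (g + J g))`, and `J` exchanges `H²` with its orthogonal
complement, i.e. `J P = (1 - P) J`. If `α` has no positive Fourier coefficients then
`P M_α (1 - P) = 0`, which gives `M(α) M(β) = M(αβ)`. If instead `β` is even, `w = β (g + J g)`
is `J`-invariant, so `P w + J P w = w` and again `M(α) M(β) = M(αβ)`. Hence
`M(φ) = M(φ₋) M(φ₀)`, and each factor is inverted by `M` of the pointwise inverse since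
`M(1) = 1`. -/

open scoped InnerProductSpace

lemma Lmul_apply_ae {φ : 𝕋 → ℂ} (hφ : MemLp φ ⊤ μ) (f : L2) :
    ⇑(Lmul φ f) =ᵐ[μ] fun x => φ x * f x := by
  rw [Lmul, dif_pos hφ]
  exact (MemLp.coeFn_toLp ((Lp.memLp f).smul (p := ⊤) (r := 2) hφ)).trans
    (.of_forall fun _ => rfl)

lemma Lmul_congr {φ ψ : 𝕋 → ℂ} (h : φ =ᵐ[μ] ψ) : Lmul φ = Lmul ψ := by
  by_cases hφ : MemLp φ ⊤ μ
  · ext1 f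
    refine Lp.ext ((Lmul_apply_ae hφ f).trans ((Lmul_apply_ae (hφ.ae_eq h) f).trans ?_).symm)
    filter_upwards [h] with x hx
    rw [hx]
  · have hψ : ¬MemLp ψ ⊤ μ := fun hψ => hφ (hψ.ae_eq h.symm)
    rw [Lmul, Lmul, dif_neg hφ, dif_neg hψ]

lemma Lmul_Lmul {α β : 𝕋 → ℂ} (hα : MemLp α ⊤ μ) (hβ : MemLp β ⊤ μ) (f : L2) :
    Lmul α (Lmul β f) = Lmul (fun x => α x * β x) f := by
  refine Lp.ext ((Lmul_apply_ae hα _).trans ?_)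
  filter_upwards [Lmul_apply_ae hβ f, Lmul_apply_ae (hβ.mul' hα) f] with x hβx hαβx
  rw [hβx, hαβx, mul_assoc]

lemma Lmul_one (f : L2) : Lmul (fun _ => 1) f = f :=
  Lp.ext ((Lmul_apply_ae (memLp_top_const 1) f).trans (.of_forall fun _ => one_mul _))

lemma memLp_top_fourier (n : ℤ) : MemLp (fun x : 𝕋 => fourier n x) ⊤ μ :=
  (fourier n).continuous.memLp_top_of_hasCompactSupport (.of_compactSpace _) μ

lemma fourier_apply_neg (n : ℤ) (x : 𝕋) : fourier n (-x) = fourier (-n) x := by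
  rw [fourier_apply, fourier_apply, smul_neg, neg_smul]

lemma ae_eq_comp_neg {f g : 𝕋 → ℂ} (h : f =ᵐ[μ] g) : (fun x => f (-x)) =ᵐ[μ] fun x => g (-x) :=
  (Measure.measurePreserving_neg μ).quasiMeasurePreserving.ae_eq_comp h

lemma Jop_apply_ae (f : L2) : ⇑(Jop f) =ᵐ[μ] fun x => fourier (-1) x * f (-x) := by
  refine (Lmul_apply_ae (memLp_top_fourier (-1)) (Cneg f)).trans ?_
  filter_upwards [Lp.coeFn_compMeasurePreserving f (Measure.measurePreserving_neg μ)] with x hx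
  rw [Cneg, hx]
  rfl

lemma Jop_Jop (f : L2) : Jop (Jop f) = f := by
  refine Lp.ext ?_
  filter_upwards [Jop_apply_ae (Jop f), ae_eq_comp_neg (Jop_apply_ae f)] with x hJJ hJ
  rw [hJJ, hJ, neg_neg, ← mul_assoc, fourier_apply_neg, ← fourier_add]
  norm_num

lemma Jop_Lmul {β : 𝕋 → ℂ} (hβ : MemLp β ⊤ μ) (f : L2) :
    Jop (Lmul β f) = Lmul (flip β) (Jop f) := by
  have hβ' : MemLp (flip β) ⊤ μ := hβ.comp_measurePreserving (Measure.measurePreserving_neg μ)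
  refine Lp.ext ?_
  filter_upwards [Jop_apply_ae (Lmul β f), ae_eq_comp_neg (Lmul_apply_ae hβ f),
    Lmul_apply_ae hβ' (Jop f), Jop_apply_ae f] with x h₁ h₂ h₃ h₄
  rw [h₁, h₃, h₄, h₂, flip, mul_left_comm]

lemma Jop_fourierLp (n : ℤ) : Jop (fourierLp 2 n) = fourierLp 2 (-1 - n) := by
  refine Lp.ext ?_
  filter_upwards [Jop_apply_ae (fourierLp 2 n), ae_eq_comp_neg (coeFn_fourierLp 2 n),
    coeFn_fourierLp 2 (-1 - n)] with x h₁ h₂ h₃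
  rw [h₁, h₂, h₃, fourier_apply_neg, ← fourier_add, sub_eq_add_neg]

lemma fourierLp_mem_Hardy {n : ℤ} (hn : 0 ≤ n) : (fourierLp 2 n : L2) ∈ Hardy :=
  Submodule.le_topologicalClosure _ (Submodule.subset_span ⟨n.toNat, by simp [hn]⟩)

lemma mem_Hardy_orthogonal {v : L2} (h : ∀ n : ℕ, ⟪(fourierLp 2 n : L2), v⟫_ℂ = 0) :
    v ∈ Hardyᗮ := by
  rw [Hardy, Submodule.orthogonal_closure, ← Submodule.span_singleton_le_iff_mem]
  exact Submodule.isOrtho_span.mpr <| by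
    rintro _ rfl _ ⟨n, rfl⟩
    exact inner_eq_zero_symm.mp (h n)

lemma inner_fourierLp (n : ℤ) (g : L2) : ⟪(fourierLp 2 n : L2), g⟫_ℂ = fourierCoeff g n := by
  rw [← fourierBasis_repr g n, HilbertBasis.repr_apply_apply, coe_fourierBasis]

lemma Pproj_of_mem {v : L2} (hv : v ∈ Hardy) : Pproj v = v :=
  Hardy.starProjection_eq_self_iff.mpr hv

lemma Pproj_of_mem_orthogonal {v : L2} (hv : v ∈ Hardyᗮ) : Pproj v = 0 := by
  simp [Pproj, Submodule.orthogonalProjectionOnto_apply_of_mem_orthogonal hv]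

lemma Pproj_fourierLp_of_neg {n : ℤ} (hn : n < 0) : Pproj (fourierLp 2 n) = 0 :=
  Pproj_of_mem_orthogonal <| mem_Hardy_orthogonal fun m => by
    have hon := (fourierBasis (T := Tp)).orthonormal
    rw [coe_fourierBasis] at hon
    exact hon.2 (by omega)

lemma ext_fourierLp {S T : L2 →L[ℂ] L2} (h : ∀ n : ℤ, S (fourierLp 2 n) = T (fourierLp 2 n)) :
    S = T := by
  refine ContinuousLinearMap.ext_on ?_ (s := Set.range (fourierLp 2)) (by rintro _ ⟨n, rfl⟩; exact h n)
  rw [← coe_fourierBasis]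
  exact Submodule.dense_iff_topologicalClosure_eq_top.mpr (fourierBasis (T := Tp)).dense_span

lemma Jop_Pproj (v : L2) : Jop (Pproj v) = Jop v - Pproj (Jop v) := by
  suffices Jop ∘L Pproj = Jop - Pproj ∘L Jop from congr($this v)
  refine ext_fourierLp fun n => ?_
  rcases le_or_gt 0 n with hn | hn
  · simp [Pproj_of_mem (fourierLp_mem_Hardy hn), Jop_fourierLp,
      Pproj_fourierLp_of_neg (show -1 - n < 0 by omega)]
  · simp [Pproj_fourierLp_of_neg hn, Jop_fourierLp,
      Pproj_of_mem (fourierLp_mem_Hardy (show 0 ≤ -1 - n by omega))]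

lemma fourierCoeff_mul_fourier (α : 𝕋 → ℂ) (m n : ℤ) :
    fourierCoeff (fun x => α x * fourier n x) m = fourierCoeff α (m - n) := by
  simp only [fourierCoeff, smul_eq_mul, neg_sub, sub_eq_add_neg n m, fourier_add]
  congr 1 with x
  ring

lemma Pproj_Lmul_Pproj {α : 𝕋 → ℂ} (hα : MemLp α ⊤ μ)
    (hanti : ∀ n : ℤ, 0 < n → fourierCoeff α n = 0) (v : L2) :
    Pproj (Lmul α (Pproj v)) = Pproj (Lmul α v) := by
  suffices Pproj ∘L Lmul α ∘L Pproj = Pproj ∘L Lmul α from congr($this v)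
  refine ext_fourierLp fun n => ?_
  rcases le_or_gt 0 n with hn | hn
  · simp [Pproj_of_mem (fourierLp_mem_Hardy hn)]
  have hαn : ⇑(Lmul α (fourierLp 2 n)) =ᵐ[μ] fun x => α x * fourier n x := by
    filter_upwards [Lmul_apply_ae hα (fourierLp 2 n), coeFn_fourierLp 2 n] with x h₁ h₂
    rw [h₁, h₂]
  have hperp : Lmul α (fourierLp 2 n) ∈ Hardyᗮ := mem_Hardy_orthogonal fun m => by
    rw [inner_fourierLp, fourierCoeff_congr_ae hαn, fourierCoeff_mul_fourier]
    exact hanti _ (by omega)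
  simp [Pproj_fourierLp_of_neg hn, Pproj_of_mem_orthogonal hperp]

lemma coe_Mop_apply (φ : 𝕋 → ℂ) (g : Hardy) :
    (Mop φ g : L2) = Pproj (Lmul φ (g + Jop g)) := by
  rw [map_add, map_add]
  rfl

lemma Mop_congr {φ ψ : 𝕋 → ℂ} (h : φ =ᵐ[μ] ψ) : Mop φ = Mop ψ := by
  rw [Mop, Mop, Top, Top, Hop, Hop, Lmul_congr h]

lemma Mop_eq_id_of_ae_eq_one {φ : 𝕋 → ℂ} (h : ∀ᵐ x ∂μ, φ x = 1) :
    Mop φ = ContinuousLinearMap.id ℂ Hardy := by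
  ext1 g
  refine Subtype.ext ?_
  have hJg : Pproj (Jop g) = 0 := by
    have := Jop_Pproj g
    rw [Pproj_of_mem g.2] at this
    exact sub_eq_self.mp this.symm
  rw [coe_Mop_apply, Lmul_congr (ψ := fun _ => 1) h, Lmul_one, map_add,
    Pproj_of_mem g.2, hJg, add_zero]
  rfl

lemma Mop_mul_of_antianalytic {α β : 𝕋 → ℂ} (hα : MemLp α ⊤ μ) (hβ : MemLp β ⊤ μ)
    (hanti : ∀ n : ℤ, 0 < n → fourierCoeff α n = 0) :
    (Mop α).comp (Mop β) = Mop (fun x => α x * β x) := by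
  ext1 g
  refine Subtype.ext ?_
  rw [ContinuousLinearMap.comp_apply, coe_Mop_apply, coe_Mop_apply, coe_Mop_apply, Jop_Pproj,
    map_add, map_sub, map_add, map_sub, Pproj_Lmul_Pproj hα hanti, Pproj_Lmul_Pproj hα hanti,
    sub_self, add_zero, Lmul_Lmul hα hβ]

lemma Mop_mul_of_even {α β : 𝕋 → ℂ} (hα : MemLp α ⊤ μ) (hβ : MemLp β ⊤ μ)
    (heven : ∀ᵐ x ∂μ, β (-x) = β x) :
    (Mop α).comp (Mop β) = Mop (fun x => α x * β x) := by
  ext1 g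
  refine Subtype.ext ?_
  have hJ : Jop (Lmul β (g + Jop g)) = Lmul β (g + Jop g) := by
    rw [Jop_Lmul hβ, Lmul_congr (φ := flip β) heven, map_add, Jop_Jop, add_comm]
  rw [ContinuousLinearMap.comp_apply, coe_Mop_apply, coe_Mop_apply, coe_Mop_apply, Jop_Pproj, hJ,
    add_sub_cancel, Lmul_Lmul hα hβ]

theorem stmt_5_general (φ φm φ0 : 𝕋 → ℂ)
    (hfac : ∀ᵐ x ∂μ, φ x = φm x * φ0 x)
    (hφm : MemLp φm ⊤ μ) (hφmi : MemLp (fun x => (φm x)⁻¹) ⊤ μ)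
    (hφm0 : ∀ᵐ x ∂μ, φm x ≠ 0)
    (hφma : ∀ n : ℤ, 0 < n → fourierCoeff φm n = 0)
    (hφmia : ∀ n : ℤ, 0 < n → fourierCoeff (fun x => (φm x)⁻¹) n = 0)
    (hφ0 : MemLp φ0 ⊤ μ) (hφ0i : MemLp (fun x => (φ0 x)⁻¹) ⊤ μ)
    (hφ00 : ∀ᵐ x ∂μ, φ0 x ≠ 0)
    (hφ0e : ∀ᵐ x ∂μ, φ0 (-x) = φ0 x) :
    (Mop φ).comp ((Mop fun x => (φ0 x)⁻¹).comp (Mop fun x => (φm x)⁻¹)) =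
        ContinuousLinearMap.id ℂ Hardy ∧
    ((Mop fun x => (φ0 x)⁻¹).comp (Mop fun x => (φm x)⁻¹)).comp (Mop φ) =
        ContinuousLinearMap.id ℂ Hardy := by
  have hφ0ie : ∀ᵐ x ∂μ, (φ0 (-x))⁻¹ = (φ0 x)⁻¹ := hφ0e.mono fun x hx => by rw [hx]
  have hsplit : Mop φ = (Mop φm).comp (Mop φ0) :=
    (Mop_congr hfac).trans (Mop_mul_of_even hφm hφ0 hφ0e).symm
  have h₀ : (Mop φ0).comp (Mop fun x => (φ0 x)⁻¹) = .id ℂ Hardy :=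
    (Mop_mul_of_even hφ0 hφ0i hφ0ie).trans
      (Mop_eq_id_of_ae_eq_one (hφ00.mono fun x hx => mul_inv_cancel₀ hx))
  have h₀' : (Mop fun x => (φ0 x)⁻¹).comp (Mop φ0) = .id ℂ Hardy :=
    (Mop_mul_of_even hφ0i hφ0 hφ0e).trans
      (Mop_eq_id_of_ae_eq_one (hφ00.mono fun x hx => inv_mul_cancel₀ hx))
  have hm : (Mop φm).comp (Mop fun x => (φm x)⁻¹) = .id ℂ Hardy :=
    (Mop_mul_of_antianalytic hφm hφmi hφma).trans
      (Mop_eq_id_of_ae_eq_one (hφm0.mono fun x hx => mul_inv_cancel₀ hx))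
  have hm' : (Mop fun x => (φm x)⁻¹).comp (Mop φm) = .id ℂ Hardy :=
    (Mop_mul_of_antianalytic hφmi hφm hφmia).trans
      (Mop_eq_id_of_ae_eq_one (hφm0.mono fun x hx => inv_mul_cancel₀ hx))
  open ContinuousLinearMap in
  constructor
  · rw [hsplit, comp_assoc, ← comp_assoc (Mop φ0), h₀, id_comp, hm]
  · rw [hsplit, comp_assoc, ← comp_assoc _ (Mop φm), hm', id_comp, h₀']

/-- If `φ = φ₋ φ₀` with `φ₋` invertible in `H^∞-bar` and `φ₀` invertible in `L^∞` and even,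
then `M(φ)` is invertible with inverse `M(φ₀⁻¹) M(φ₋⁻¹)`. -/
theorem stmt_5 (φ φm φ0 : 𝕋 → ℂ) (hφ : MemLp φ ⊤ μ)
    (hfac : ∀ᵐ x ∂μ, φ x = φm x * φ0 x)
    (hφm : MemLp φm ⊤ μ) (hφmi : MemLp (fun x => (φm x)⁻¹) ⊤ μ)
    (hφm0 : ∀ᵐ x ∂μ, φm x ≠ 0)
    (hφma : ∀ n : ℤ, 0 < n → fourierCoeff φm n = 0)
    (hφmia : ∀ n : ℤ, 0 < n → fourierCoeff (fun x => (φm x)⁻¹) n = 0)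
    (hφ0 : MemLp φ0 ⊤ μ) (hφ0i : MemLp (fun x => (φ0 x)⁻¹) ⊤ μ)
    (hφ00 : ∀ᵐ x ∂μ, φ0 x ≠ 0)
    (hφ0e : ∀ᵐ x ∂μ, φ0 (-x) = φ0 x) :
    (Mop φ).comp ((Mop fun x => (φ0 x)⁻¹).comp (Mop fun x => (φm x)⁻¹)) =
        ContinuousLinearMap.id ℂ Hardy ∧
    ((Mop fun x => (φ0 x)⁻¹).comp (Mop fun x => (φm x)⁻¹)).comp (Mop φ) =
        ContinuousLinearMap.id ℂ Hardy :=
  stmt_5_general φ φm φ0 hfac hφm hφmi hφm0 hφma hφmia hφ0 hφ0i hφ00 hφ0e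

end TH
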